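/- First step of the IHT support theorem: under ‖A‖ ≤ 1, x ∈ 𝒮^p_{η,k,r} with ‖x|_{S_r(x)ᶜ}‖₂ ≤ η, τ > η², and the condition 𝒥₀(x^IHT) ≤ 𝒥₀(x|_{S_r(x)}) where 𝒥₀(z) = ‖Az − Ax‖₂² + τ·#supp(z), one has #supp(x^IHT) ≤ #S_r(x). -/

import Mathlib

open Finset

/-- ℓ¹ norm of a vector. -/
noncomputable def l1 {N : ℕ} (x : Fin N → ℝ) : ℝ := ∑ i, |x i|

/-- ℓ² norm of a vector. -/
noncomputable def l2 {n : ℕ} (x : Fin n → ℝ) : ℝ := Real.sqrt (∑ i, (x i) ^ 2)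

/-- Restriction of a vector to an index set (zero off the set). -/
noncomputable def restr {N : ℕ} (Λ : Finset (Fin N)) (x : Fin N → ℝ) : Fin N → ℝ :=
  fun i => if i ∈ Λ then x i else 0

/-- Support of a vector as a finset. -/
noncomputable def supp {N : ℕ} (z : Fin N → ℝ) : Finset (Fin N) :=
  univ.filter (fun i => z i ≠ 0)

/-- Null Space Property of order `k` with constant `γ`. -/
def NSP {m N : ℕ} (A : Matrix (Fin m) (Fin N) ℝ) (k : ℕ) (γ : ℝ) : Prop :=
  ∀ z : Fin N → ℝ, A.mulVec z = 0 → ∀ Λ : Finset (Fin N), Λ.card ≤ k →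
    l1 (restr Λ z) ≤ γ * l1 (restr Λᶜ z)

/-- Restricted Isometry Property of order `K` with constant `δ` (norm version). -/
noncomputable def RIP {m N : ℕ} (A : Matrix (Fin m) (Fin N) ℝ) (K : ℕ) (δ : ℝ) : Prop :=
  ∀ z : Fin N → ℝ, (supp z).card ≤ K →
    (1 - δ) * l2 z ≤ l2 (A.mulVec z) ∧ l2 (A.mulVec z) ≤ (1 + δ) * l2 z

/-- ℓ¹ best `k`-term approximation error. -/
noncomputable def sigma1 {N : ℕ} (k : ℕ) (x : Fin N → ℝ) : ℝ :=
  sInf {t : ℝ | ∃ z : Fin N → ℝ, (supp z).card ≤ k ∧ t = l1 (x - z)}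

/-- Index set of entries exceeding `r` in absolute value. -/
noncomputable def Sr {N : ℕ} (r : ℝ) (x : Fin N → ℝ) : Finset (Fin N) :=
  univ.filter (fun i => r < |x i|)

/-- The Hölder constant κ_p(N,k). -/
noncomputable def kappa (p : ℝ) (N k : ℕ) : ℝ :=
  if p = 1 then 1 else ((N - k : ℕ) : ℝ) ^ (1 - 1 / p)

/-- Membership in the class 𝒮^p_{η,k,r} of sparse vectors affected by bounded noise. -/
noncomputable def inClass {N : ℕ} (p η : ℝ) (k : ℕ) (r : ℝ) (x : Fin N → ℝ) : Prop :=
  (Sr r x).card ≤ k ∧ ∑ i ∈ (Sr r x)ᶜ, |x i| ^ p ≤ η ^ p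

/-- Entrywise hard thresholding with threshold `t`. -/
noncomputable def hardThr {N : ℕ} (t : ℝ) (z : Fin N → ℝ) : Fin N → ℝ :=
  fun i => if t < |z i| then z i else 0

/-! The residual of `x|_{S_r(x)}` is `‖A(x|_{S_r(x)ᶜ})‖₂ ≤ η`, so a support larger than
`#S_r(x)` would cost at least `τ > η²` in the penalty while saving at most `η²` in the residual. -/

lemma l2_nonneg {n : ℕ} (z : Fin n → ℝ) : 0 ≤ l2 z := Real.sqrt_nonneg _

lemma l2_neg {n : ℕ} (z : Fin n → ℝ) : l2 (-z) = l2 z := by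
  simp only [l2, Pi.neg_apply, neg_sq]

lemma restr_sub_self {N : ℕ} (Λ : Finset (Fin N)) (x : Fin N → ℝ) :
    restr Λ x - x = -restr Λᶜ x := by
  funext i
  by_cases h : i ∈ Λ <;> simp [restr, h]

lemma supp_restr_subset {N : ℕ} (Λ : Finset (Fin N)) (x : Fin N → ℝ) :
    supp (restr Λ x) ⊆ Λ := by
  intro i hi
  by_contra h
  simp [supp, restr, h] at hi

lemma l2_mulVec_restr_sub_le {m N : ℕ} {A : Matrix (Fin m) (Fin N) ℝ}
    (hA : ∀ z : Fin N → ℝ, l2 (A.mulVec z) ≤ l2 z) (Λ : Finset (Fin N)) (x : Fin N → ℝ) :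
    l2 (A.mulVec (restr Λ x) - A.mulVec x) ≤ l2 (restr Λᶜ x) := by
  rw [← Matrix.mulVec_sub, restr_sub_self, Matrix.mulVec_neg, l2_neg]
  exact hA _

lemma Nat.le_of_add_mul_le_add_mul {a b τ : ℝ} {n s : ℕ} (hτ : 0 < τ)
    (h : a + τ * n ≤ b + τ * s) (hab : b < a + τ) : n ≤ s := by
  by_contra! hsn
  have : (s : ℝ) + 1 ≤ n := by exact_mod_cast hsn
  nlinarith

theorem stmt13_general {m N : ℕ} (A : Matrix (Fin m) (Fin N) ℝ)
    (η r τ : ℝ)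
    (hAnorm : ∀ z : Fin N → ℝ, l2 (A.mulVec z) ≤ l2 z)
    (x : Fin N → ℝ)
    (htail2 : l2 (restr (Sr r x)ᶜ x) ≤ η)
    (hτ : η ^ 2 < τ)
    (xIHT : Fin N → ℝ)
    (hJ : l2 (A.mulVec xIHT - A.mulVec x) ^ 2 + τ * ((supp xIHT).card : ℝ) ≤
      l2 (A.mulVec (restr (Sr r x) x) - A.mulVec x) ^ 2 +
        τ * ((supp (restr (Sr r x) x)).card : ℝ)) :
    (supp xIHT).card ≤ (Sr r x).card := by
  set S := Sr r x
  have hτ0 : 0 < τ := (sq_nonneg η).trans_lt hτ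
  have hres : l2 (A.mulVec (restr S x) - A.mulVec x) ^ 2 ≤ η ^ 2 :=
    pow_le_pow_left₀ (l2_nonneg _) ((l2_mulVec_restr_sub_le hAnorm S x).trans htail2) 2
  have hcard : ((supp (restr S x)).card : ℝ) ≤ S.card := by
    exact_mod_cast card_le_card (supp_restr_subset S x)
  refine Nat.le_of_add_mul_le_add_mul hτ0
    (a := l2 (A.mulVec xIHT - A.mulVec x) ^ 2) (b := η ^ 2) ?_ ?_
  · linarith [mul_le_mul_of_nonneg_left hcard hτ0.le]
  · linarith [sq_nonneg (l2 (A.mulVec xIHT - A.mulVec x))]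

theorem stmt13 {m N : ℕ} (A : Matrix (Fin m) (Fin N) ℝ) (k : ℕ)
    (p η r τ : ℝ)
    (hAnorm : ∀ z : Fin N → ℝ, l2 (A.mulVec z) ≤ l2 z)
    (hp : 1 ≤ p) (hp2 : p ≤ 2) (hη : 0 ≤ η)
    (x : Fin N → ℝ) (hx : inClass p η k r x)
    (htail2 : l2 (restr (Sr r x)ᶜ x) ≤ η)
    (hτ : η ^ 2 < τ)
    (xIHT : Fin N → ℝ)
    (hJ : l2 (A.mulVec xIHT - A.mulVec x) ^ 2 + τ * ((supp xIHT).card : ℝ) ≤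
      l2 (A.mulVec (restr (Sr r x) x) - A.mulVec x) ^ 2 +
        τ * ((supp (restr (Sr r x) x)).card : ℝ)) :
    (supp xIHT).card ≤ (Sr r x).card :=
  stmt13_general A η r τ hAnorm x htail2 hτ xIHT hJ
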